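/- A set S ⊆ {−,+}^n containing the all-plus and all-minus vectors is d-realisable if and only if S × {+,−} ⊆ {−,+}^{n+1} is (d+1)-realisable. -/

import Mathlib

/-!
If the hyperplanes `⟪c i, x⟫ = β i` realise `S` in `ℝ^d`, then the hyperplanes
`⟪(c i, 0), (x, t)⟫ = β i` together with `t = 0` realise `S × {+,−}` in `ℝ^(d+1)`: use the points
`(p, ±1)`. Conversely, if `σ+` and `σ−` are realised by `q` and `p`, the segment `[p, q]` stays in
the (convex) cell of `σ` for the first `n` hyperplanes and crosses the last hyperplane `H`. So
every `σ ∈ S` is realised inside `H ≅ ℝ^d`, by the restrictions of the first `n` hyperplanes.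
No restriction degenerates (has zero normal), since the all-plus and all-minus patterns are both
realised in `H`, so none of the restricted functionals is constant on `H`.
-/

/-- S ⊆ {−,+}^n (+ is `true`) is d-realisable if there are n oriented affine hyperplanes
in ℝ^d such that every σ ∈ S is the sign pattern of some point. -/
def Realisable (d n : ℕ) (S : Set (Fin n → Bool)) : Prop :=
  ∃ (c : Fin n → EuclideanSpace ℝ (Fin d)) (β : Fin n → ℝ),
    (∀ i, c i ≠ 0) ∧
    ∀ σ ∈ S, ∃ p : EuclideanSpace ℝ (Fin d),
      ∀ i, if σ i then β i < (inner ℝ (c i) p : ℝ) else (inner ℝ (c i) p : ℝ) < β i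

open Module

section SignPattern

variable {E F ι : Type*} [NormedAddCommGroup E] [InnerProductSpace ℝ E]
  [NormedAddCommGroup F] [InnerProductSpace ℝ F]

def HasSignPattern (c : ι → E) (β : ι → ℝ) (σ : ι → Bool) (p : E) : Prop :=
  ∀ i, if σ i then β i < (inner ℝ (c i) p : ℝ) else (inner ℝ (c i) p : ℝ) < β i

theorem realisable_iff_exists_hasSignPattern {d n : ℕ} {S : Set (Fin n → Bool)} :
    Realisable d n S ↔ ∃ (c : Fin n → EuclideanSpace ℝ (Fin d)) (β : Fin n → ℝ),
      (∀ i, c i ≠ 0) ∧ ∀ σ ∈ S, ∃ p, HasSignPattern c β σ p :=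
  Iff.rfl

theorem hasSignPattern_congr {c : ι → E} {β : ι → ℝ} {p : E} {c' : ι → F} {β' : ι → ℝ} {p' : F}
    (h : ∀ i, inner ℝ (c i) p - β i = inner ℝ (c' i) p' - β' i) (σ : ι → Bool) :
    HasSignPattern c β σ p ↔ HasSignPattern c' β' σ p' := by
  refine forall_congr' fun i => ?_
  have := h i
  split_ifs <;> constructor <;> intro <;> linarith

theorem hasSignPattern_iff_init {n : ℕ} {c : Fin (n + 1) → E} {β : Fin (n + 1) → ℝ}
    {σ : Fin (n + 1) → Bool} {p : E} :
    HasSignPattern c β σ p ↔ HasSignPattern (Fin.init c) (Fin.init β) (Fin.init σ) p ∧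
      if σ (Fin.last n) then β (Fin.last n) < inner ℝ (c (Fin.last n)) p
      else inner ℝ (c (Fin.last n)) p < β (Fin.last n) :=
  Fin.forall_fin_succ'

theorem convex_setOf_hasSignPattern (c : ι → E) (β : ι → ℝ) (σ : ι → Bool) :
    Convex ℝ {p | HasSignPattern c β σ p} := by
  simp only [HasSignPattern, Set.ofPred_forall]
  refine convex_iInter fun i => ?_
  split_ifs
  · exact convex_halfSpace_gt (innerₛₗ ℝ (c i)).isLinear _
  · exact convex_halfSpace_lt (innerₛₗ ℝ (c i)).isLinear _

theorem ne_zero_of_hasSignPattern_true_false {c : ι → E} {β : ι → ℝ} {p q : E}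
    (hp : HasSignPattern c β (fun _ => true) p) (hq : HasSignPattern c β (fun _ => false) q)
    (i : ι) : c i ≠ 0 := by
  rintro hc
  have hpi := hp i
  have hqi := hq i
  simp only [hc, inner_zero_left, if_true, Bool.false_eq_true, if_false] at hpi hqi
  linarith

theorem exists_hasSignPattern_inner_eq {c : ι → E} {β : ι → ℝ} {σ : ι → Bool} {p q : E}
    (hp : HasSignPattern c β σ p) (hq : HasSignPattern c β σ q) {a : E} {b : ℝ}
    (hpb : inner ℝ a p ≤ b) (hqb : b ≤ inner ℝ a q) :
    ∃ x, HasSignPattern c β σ x ∧ inner ℝ a x = b := by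
  obtain ⟨x, hx, hxb⟩ := (convex_segment p q).isPreconnected.intermediate_value
    (left_mem_segment ℝ p q) (right_mem_segment ℝ p q)
    (continuous_const.inner continuous_id).continuousOn ⟨hpb, hqb⟩
  exact ⟨x, (convex_setOf_hasSignPattern c β σ).segment_subset hp hq hx, hxb⟩

theorem hasSignPattern_add_linearMap_iff [FiniteDimensional ℝ E] [FiniteDimensional ℝ F]
    {c : ι → E} {β : ι → ℝ} {σ : ι → Bool} {x₀ : E} {L : F →ₗ[ℝ] E} {y : F} :
    HasSignPattern c β σ (x₀ + L y) ↔
      HasSignPattern (fun i => L.adjoint (c i)) (fun i => β i - inner ℝ (c i) x₀) σ y :=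
  hasSignPattern_congr (fun i => by rw [inner_add_right, LinearMap.adjoint_inner_left]; ring) σ

end SignPattern

theorem exists_hyperplane_subset_range_add_linearMap {E : Type*} [NormedAddCommGroup E]
    [InnerProductSpace ℝ E] {d : ℕ} (hE : finrank ℝ E = d + 1) {a : E} (ha : a ≠ 0) (b : ℝ) :
    ∃ (x₀ : E) (L : EuclideanSpace ℝ (Fin d) →ₗ[ℝ] E),
      {x | inner ℝ a x = b} ⊆ Set.range fun y => x₀ + L y := by
  have : Fact (finrank ℝ E = d + 1) := ⟨hE⟩
  set K := (ℝ ∙ a)ᗮ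
  let e := (OrthonormalBasis.fromOrthogonalSpanSingleton (𝕜 := ℝ) d ha).repr
  set x₀ : E := (b / ‖a‖ ^ 2) • a
  have hx₀ : inner ℝ a x₀ = b := by
    have : ‖a‖ ≠ 0 := norm_ne_zero_iff.mpr ha
    rw [real_inner_smul_right, real_inner_self_eq_norm_sq]
    field_simp
  refine ⟨x₀, K.subtype ∘ₗ e.symm.toLinearEquiv.toLinearMap, fun x hx => ?_⟩
  have hxK : x - x₀ ∈ K := by
    rw [Submodule.mem_orthogonal_singleton_iff_inner_right, inner_sub_right, hx, hx₀, sub_self]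
  exact ⟨e ⟨x - x₀, hxK⟩, by simp⟩

namespace EuclideanSpace

noncomputable def snoc {d : ℕ} (v : EuclideanSpace ℝ (Fin d)) (a : ℝ) :
    EuclideanSpace ℝ (Fin (d + 1)) :=
  WithLp.toLp 2 (Fin.snoc (WithLp.ofLp v) a)

theorem inner_snoc_snoc {d : ℕ} (v w : EuclideanSpace ℝ (Fin d)) (a b : ℝ) :
    inner ℝ (snoc v a) (snoc w b) = inner ℝ v w + a * b := by
  simp [snoc, PiLp.inner_apply, Fin.sum_univ_castSucc, mul_comm]

theorem snoc_eq_zero_iff {d : ℕ} {v : EuclideanSpace ℝ (Fin d)} {a : ℝ} :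
    snoc v a = 0 ↔ v = 0 ∧ a = 0 := by
  have h0 : (0 : EuclideanSpace ℝ (Fin (d + 1))) = snoc 0 0 := by
    ext i
    refine Fin.lastCases ?_ (fun i => ?_) i <;> simp [snoc]
  rw [h0]
  simp [snoc]

end EuclideanSpace

open EuclideanSpace in
theorem Realisable.succ {d n : ℕ} {S : Set (Fin n → Bool)} (h : Realisable d n S) :
    Realisable (d + 1) (n + 1) {τ : Fin (n + 1) → Bool | Fin.init τ ∈ S} := by
  obtain ⟨c, β, hc, hr⟩ := realisable_iff_exists_hasSignPattern.1 h
  refine ⟨Fin.snoc (fun i => snoc (c i) 0) (snoc 0 1), Fin.snoc β 0, ?_, fun τ hτ => ?_⟩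
  · refine Fin.lastCases ?_ (fun i => ?_)
    all_goals simp [snoc_eq_zero_iff, hc]
  · obtain ⟨p, hp⟩ := hr (Fin.init τ) hτ
    refine ⟨snoc p (if τ (Fin.last n) then 1 else -1), hasSignPattern_iff_init.2 ⟨?_, ?_⟩⟩
    · simp only [Fin.init_snoc]
      exact (hasSignPattern_congr (fun i => by simp [inner_snoc_snoc]) _).1 hp
    · cases τ (Fin.last n) <;> simp [inner_snoc_snoc]

theorem Realisable.of_succ {d n : ℕ} {S : Set (Fin n → Bool)}
    (hplus : (fun _ => true) ∈ S) (hminus : (fun _ => false) ∈ S)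
    (h : Realisable (d + 1) (n + 1) {τ : Fin (n + 1) → Bool | Fin.init τ ∈ S}) :
    Realisable d n S := by
  obtain ⟨C, B, hC, hr⟩ := realisable_iff_exists_hasSignPattern.1 h
  have hcross : ∀ σ ∈ S, ∃ x, HasSignPattern (Fin.init C) (Fin.init B) σ x ∧
      inner ℝ (C (Fin.last n)) x = B (Fin.last n) := by
    intro σ hσ
    obtain ⟨p, hp⟩ := hr (Fin.snoc σ false) (by simpa using hσ)
    obtain ⟨q, hq⟩ := hr (Fin.snoc σ true) (by simpa using hσ)
    rw [hasSignPattern_iff_init] at hp hq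
    simp only [Fin.init_snoc, Fin.snoc_last, if_true, Bool.false_eq_true, if_false] at hp hq
    exact exists_hasSignPattern_inner_eq hp.1 hq.1 hp.2.le hq.2.le
  obtain ⟨x₀, L, hL⟩ :=
    exists_hyperplane_subset_range_add_linearMap finrank_euclideanSpace_fin (hC _) (B (Fin.last n))
  have hrestrict : ∀ σ ∈ S, ∃ y, HasSignPattern (fun i => L.adjoint (Fin.init C i))
      (fun i => Fin.init B i - inner ℝ (Fin.init C i) x₀) σ y := by
    intro σ hσ
    obtain ⟨x, hx, hxH⟩ := hcross σ hσ
    obtain ⟨y, rfl⟩ := hL hxH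
    exact ⟨y, hasSignPattern_add_linearMap_iff.1 hx⟩
  obtain ⟨yP, hyP⟩ := hrestrict _ hplus
  obtain ⟨yM, hyM⟩ := hrestrict _ hminus
  exact ⟨_, _, ne_zero_of_hasSignPattern_true_false hyP hyM, hrestrict⟩

/-- S containing the all-plus and all-minus vectors is d-realisable iff
S × {+,−} is (d+1)-realisable. -/
theorem stmt_10 (d n : ℕ) (S : Set (Fin n → Bool))
    (hplus : (fun _ => true) ∈ S) (hminus : (fun _ => false) ∈ S) :
    Realisable d n S ↔
      Realisable (d + 1) (n + 1) {τ : Fin (n + 1) → Bool | Fin.init τ ∈ S} :=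
  ⟨Realisable.succ, Realisable.of_succ hplus hminus⟩
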